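/- There exists a constant C > 0, depending only on d, Ω, μ, ψ and ‖f‖_∞, such that for every 1 ≤ p ≤ 2, every 0 < h < 1 and every N ≥ 1: E‖Q_h f − E[Q_h f]‖_p ≤ C N^{−1/2} h^{−d/2}. (Paper's Lemma 3.5.) -/

import Mathlib

/-!
For fixed `x`, `Q_h f(x)` is the empirical mean of `N` independent copies of
`f(Y) ψ_h(x - Y)` with `Y ∼ μ`, so its variance is at most
`N⁻¹ ∫ f² ψ_h(x - ·)² dμ ≤ N⁻¹ ‖f‖²_∞ ‖ψ‖_∞ h^{-d} ∫ ψ_h(x - ·) dμ`.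
Integrating in `x` and using `∫ ψ_h = 1` bounds `E‖Q_h f - E Q_h f‖₂²` by
`‖f‖²_∞ ‖ψ‖_∞ / (N h^d)`. Jensen's inequality moves the square root outside the expectation,
and on the bounded set `Ω` the `Lᵖ` norm with `p ≤ 2` is at most `max 1 |Ω|` times the `L²` norm.
Since `f` is only continuous on `Ω`, it is replaced by its extension by zero, which agrees with
`f` at the samples almost surely.
-/

open MeasureTheory ProbabilityTheory Real
open scoped ENNReal

/-- The scaled kernel `ψ_h(x) = h^{-d} ψ(x/h)`. -/
noncomputable def psih {d : ℕ} (ψ : EuclideanSpace ℝ (Fin d) → ℝ) (h : ℝ)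
    (x : EuclideanSpace ℝ (Fin d)) : ℝ :=
  (h ^ d)⁻¹ * ψ (h⁻¹ • x)

/-- Modulus of continuity of `f` on `Ω`. -/
noncomputable def modulus {d : ℕ} (Ω : Set (EuclideanSpace ℝ (Fin d)))
    (f : EuclideanSpace ℝ (Fin d) → ℝ) (t : ℝ) : ℝ :=
  sSup {v : ℝ | ∃ x ∈ Ω, ∃ y ∈ Ω, dist x y ≤ t ∧ v = |f x - f y|}

/-- Sup norm of `f` over `Ω`. -/
noncomputable def supNorm {d : ℕ} (Ω : Set (EuclideanSpace ℝ (Fin d)))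
    (f : EuclideanSpace ℝ (Fin d) → ℝ) : ℝ :=
  sSup {v : ℝ | ∃ x ∈ Ω, v = |f x|}

/-- Assumption (A2): the Fourier transform of the measure `μs` is `L¹` on `ℝ^d`. -/
def FourierL1 {d : ℕ} (μs : Measure (EuclideanSpace ℝ (Fin d))) : Prop :=
  Integrable (fun ξ : EuclideanSpace ℝ (Fin d) =>
    ∫ t, Complex.exp (-(Complex.I) * ((inner ℝ t ξ : ℝ) : ℂ)) ∂μs) volume

section ScaledKernel

variable {d : ℕ} {ψ : EuclideanSpace ℝ (Fin d) → ℝ} {h : ℝ}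

lemma psih_nonneg (hψ : ∀ x, 0 ≤ ψ x) (hh : 0 ≤ h) (x : EuclideanSpace ℝ (Fin d)) :
    0 ≤ psih ψ h x :=
  mul_nonneg (inv_nonneg.2 (pow_nonneg hh d)) (hψ _)

lemma psih_le {B : ℝ} (hψB : ∀ x, ψ x ≤ B) (hh : 0 ≤ h) (x : EuclideanSpace ℝ (Fin d)) :
    psih ψ h x ≤ (h ^ d)⁻¹ * B :=
  mul_le_mul_of_nonneg_left (hψB _) (inv_nonneg.2 (pow_nonneg hh d))

lemma measurable_psih (hψ : Measurable ψ) : Measurable (psih ψ h) :=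
  (hψ.comp (measurable_const_smul _)).const_mul _

lemma measurable_uncurry_mul_psih_sub {F : EuclideanSpace ℝ (Fin d) → ℝ} (hF : Measurable F)
    (hψ : Measurable ψ) : Measurable (Function.uncurry fun x y => F y * psih ψ h (x - y)) :=
  (hF.comp measurable_snd).mul ((measurable_psih hψ).comp (measurable_fst.sub measurable_snd))

lemma integral_psih (hh : 0 < h) : ∫ x, psih ψ h x = ∫ x, ψ x := by
  simp only [psih, integral_const_mul, Measure.integral_comp_inv_smul_of_nonneg volume ψ hh.le,
    finrank_euclideanSpace_fin, smul_eq_mul]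
  field_simp

lemma integrable_psih (hψ : Integrable ψ) (hh : 0 < h) : Integrable (psih ψ h) :=
  ((integrable_comp_smul_iff volume ψ (inv_ne_zero hh.ne')).2 hψ).const_mul _

lemma lintegral_ofReal_psih_sub (hψ0 : ∀ x, 0 ≤ ψ x) (hψ1 : ∫ x, ψ x = 1) (hh : 0 < h)
    (y : EuclideanSpace ℝ (Fin d)) : ∫⁻ x, ENNReal.ofReal (psih ψ h (x - y)) = 1 := by
  have hψ : Integrable ψ := by
    by_contra hψ
    simp [integral_undef hψ] at hψ1
  rw [lintegral_sub_right_eq_self (fun x => ENNReal.ofReal (psih ψ h x)) y,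
    ← ofReal_integral_eq_lintegral_ofReal (integrable_psih hψ hh)
      (Filter.Eventually.of_forall (psih_nonneg hψ0 hh.le)),
    integral_psih hh, hψ1, ENNReal.ofReal_one]

lemma lintegral_lintegral_ofReal_psih_sub (hψ : Measurable ψ) (hψ0 : ∀ x, 0 ≤ ψ x)
    (hψ1 : ∫ x, ψ x = 1) (hh : 0 < h) (μ : Measure (EuclideanSpace ℝ (Fin d)))
    [IsProbabilityMeasure μ] :
    ∫⁻ x, ∫⁻ y, ENNReal.ofReal (psih ψ h (x - y)) ∂μ = 1 := by
  have hm : Measurable (Function.uncurry fun x y => ENNReal.ofReal (psih ψ h (x - y))) :=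
    ENNReal.measurable_ofReal.comp ((measurable_psih hψ).comp (measurable_fst.sub measurable_snd))
  rw [lintegral_lintegral_swap hm.aemeasurable]
  simp [lintegral_ofReal_psih_sub hψ0 hψ1 hh]

lemma lintegral_lintegral_enorm_mul_psih_sub_sq_le (hψ : Measurable ψ) (hψ0 : ∀ x, 0 ≤ ψ x)
    (hψ1 : ∫ x, ψ x = 1) {B : ℝ} (hψB : ∀ x, ψ x ≤ B) (hh : 0 < h)
    (μ : Measure (EuclideanSpace ℝ (Fin d))) [IsProbabilityMeasure μ]
    {F : EuclideanSpace ℝ (Fin d) → ℝ} {M : ℝ} (hFM : ∀ y, |F y| ≤ M)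
    (s : Set (EuclideanSpace ℝ (Fin d))) :
    ∫⁻ x in s, ∫⁻ y, ‖F y * psih ψ h (x - y)‖ₑ ^ 2 ∂μ ≤
      ENNReal.ofReal (M ^ 2 * ((h ^ d)⁻¹ * B)) := by
  set K := ENNReal.ofReal (M ^ 2 * ((h ^ d)⁻¹ * B))
  -- `ψ_h² ≤ ‖ψ_h‖_∞ ψ_h`: one factor is bounded by its sup, the other integrates to one
  have hpt : ∀ x y, ‖F y * psih ψ h (x - y)‖ₑ ^ 2 ≤ K * ENNReal.ofReal (psih ψ h (x - y)) := by
    intro x y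
    have h0 := psih_nonneg hψ0 hh.le (x - y)
    have h1 := psih_le hψB hh.le (x - y)
    have hF : F y ^ 2 ≤ M ^ 2 := sq_le_sq' (abs_le.1 (hFM y)).1 (abs_le.1 (hFM y)).2
    rw [Real.enorm_eq_ofReal_abs, ← ENNReal.ofReal_pow (abs_nonneg _), sq_abs,
      ← ENNReal.ofReal_mul (by have := (hψ0 0).trans (hψB 0); positivity)]
    refine ENNReal.ofReal_le_ofReal ?_
    calc (F y * psih ψ h (x - y)) ^ 2 = F y ^ 2 * (psih ψ h (x - y) * psih ψ h (x - y)) := by ring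
      _ ≤ M ^ 2 * ((h ^ d)⁻¹ * B * psih ψ h (x - y)) := by gcongr
      _ = M ^ 2 * ((h ^ d)⁻¹ * B) * psih ψ h (x - y) := by ring
  calc ∫⁻ x in s, ∫⁻ y, ‖F y * psih ψ h (x - y)‖ₑ ^ 2 ∂μ
      ≤ ∫⁻ x, ∫⁻ y, K * ENNReal.ofReal (psih ψ h (x - y)) ∂μ :=
        (setLIntegral_le_lintegral _ _).trans (lintegral_mono fun x => lintegral_mono (hpt x))
    _ = K := by
        simp only [lintegral_const_mul' K _ ENNReal.ofReal_ne_top,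
          lintegral_lintegral_ofReal_psih_sub hψ hψ0 hψ1 hh, mul_one]

end ScaledKernel

lemma eLpNorm_two_sq {α ε : Type*} [MeasurableSpace α] [ENorm ε] {μ : Measure α} (f : α → ε) :
    eLpNorm f 2 μ ^ 2 = ∫⁻ x, ‖f x‖ₑ ^ 2 ∂μ := by
  simpa using eLpNorm_nnreal_pow_eq_lintegral (f := f) (μ := μ) (p := 2) two_ne_zero

lemma eLpNorm_two_eq {α ε : Type*} [MeasurableSpace α] [ENorm ε] {μ : Measure α} (f : α → ε) :
    eLpNorm f 2 μ = (∫⁻ x, ‖f x‖ₑ ^ 2 ∂μ) ^ (2⁻¹ : ℝ) := by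
  rw [← eLpNorm_two_sq]
  exact_mod_cast (ENNReal.pow_rpow_inv_natCast two_ne_zero _).symm

lemma eLpNorm_le_eLpNorm_two_mul_max_one {α E : Type*} [MeasurableSpace α]
    [NormedAddCommGroup E] {ν : Measure α} {f : α → E} {p : ℝ≥0∞} (hp1 : 1 ≤ p) (hp2 : p ≤ 2)
    (hf : AEStronglyMeasurable f ν) :
    eLpNorm f p ν ≤ eLpNorm f 2 ν * max 1 (ν Set.univ) := by
  have hp1' : 1 ≤ p.toReal := by
    simpa using ENNReal.toReal_mono (hp2.trans_lt (by simp)).ne hp1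
  have hp2' : p.toReal ≤ 2 := by simpa using ENNReal.toReal_mono (by simp) hp2
  have hexp : 1 / p.toReal - 1 / (2 : ℝ≥0∞).toReal ∈ Set.Icc (0 : ℝ) 1 := by
    have : 1 / p.toReal ≤ 1 := (div_le_one (by linarith)).2 hp1'
    have : 1 / 2 ≤ 1 / p.toReal := one_div_le_one_div_of_le (by linarith) hp2'
    simp only [ENNReal.toReal_ofNat, Set.mem_Icc]
    constructor <;> linarith
  refine (eLpNorm_le_eLpNorm_mul_rpow_measure_univ hp2 hf).trans ?_
  gcongr
  rcases le_total (ν Set.univ) 1 with hν | hν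
  · exact (ENNReal.rpow_le_one hν hexp.1).trans (le_max_left _ _)
  · calc ν Set.univ ^ (1 / p.toReal - 1 / (2 : ℝ≥0∞).toReal)
        ≤ ν Set.univ ^ (1 : ℝ) := ENNReal.rpow_le_rpow_of_exponent_le hν hexp.2
      _ ≤ max 1 (ν Set.univ) := by simp

lemma lintegral_eLpNorm_le_lintegral_eLpNorm_two_mul_max_one {Θ α E : Type*} [MeasurableSpace Θ]
    [MeasurableSpace α] [NormedAddCommGroup E] (P : Measure Θ) {ν : Measure α}
    (hν : ν Set.univ ≠ ⊤) {D : Θ → α → E} (hD : ∀ θ, AEStronglyMeasurable (D θ) ν) {p : ℝ≥0∞}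
    (hp1 : 1 ≤ p) (hp2 : p ≤ 2) :
    ∫⁻ θ, eLpNorm (D θ) p ν ∂P ≤ (∫⁻ θ, eLpNorm (D θ) 2 ν ∂P) * max 1 (ν Set.univ) := by
  rw [← lintegral_mul_const' _ _ (max_ne_top ENNReal.one_ne_top hν)]
  exact lintegral_mono fun θ => eLpNorm_le_eLpNorm_two_mul_max_one hp1 hp2 (hD θ)

lemma ContinuousOn.measurable_indicator {α β : Type*} [TopologicalSpace α] [MeasurableSpace α]
    [OpensMeasurableSpace α] [TopologicalSpace β] [MeasurableSpace β] [BorelSpace β] [Zero β]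
    {f : α → β} {s : Set α} (hf : ContinuousOn f s) (hs : MeasurableSet s) :
    Measurable (s.indicator f) := by
  classical
  rw [← Set.piecewise_eq_indicator]
  exact hf.measurable_piecewise continuousOn_const hs

lemma IsCompact.exists_pos_abs_indicator_le {α : Type*} [TopologicalSpace α] {s : Set α}
    (hs : IsCompact s) {f : α → ℝ} (hf : ContinuousOn f s) :
    ∃ M > 0, ∀ y, |s.indicator f y| ≤ M := by
  obtain ⟨M, hM⟩ := hs.exists_bound_of_continuousOn hf
  refine ⟨max M 1, by positivity, fun y => ?_⟩
  by_cases hy : y ∈ s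
  · simpa [hy] using (hM y hy).trans (le_max_left _ _)
  · simp [hy]

section EmpiricalMean

variable {Θ S : Type*} [MeasurableSpace Θ] [MeasurableSpace S] {P : Measure Θ} {μ : Measure S}
  {N : ℕ} {X : Fin N → Θ → S} {φ : S → ℝ}

lemma variance_empirical_mean (hφ : Measurable φ) (hφ2 : MemLp φ 2 μ)
    (hX : ∀ j, MeasurePreserving (X j) P μ) (hXind : iIndepFun X P) :
    Var[fun θ => (N : ℝ)⁻¹ * ∑ j, φ (X j θ); P] = (N : ℝ)⁻¹ * Var[φ; μ] := by
  have hpair : Set.Pairwise ↑(Finset.univ : Finset (Fin N))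
      fun i j => IndepFun (φ ∘ X i) (φ ∘ X j) P := fun i _ j _ hij =>
    (hXind.comp (fun _ => φ) fun _ => hφ).indepFun hij
  calc Var[fun θ => (N : ℝ)⁻¹ * ∑ j, φ (X j θ); P]
      = (N : ℝ)⁻¹ ^ 2 * Var[∑ j, φ ∘ X j; P] := by
        rw [← variance_const_mul]; congr with θ; simp
    _ = (N : ℝ)⁻¹ * Var[φ; μ] := by
        rw [IndepFun.variance_sum (fun j _ => hφ2.comp_measurePreserving (hX j)) hpair]
        simp only [Function.comp_def, fun j => (hX j).variance_fun_comp hφ.aemeasurable,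
          Finset.sum_const, Finset.card_univ, Fintype.card_fin, nsmul_eq_mul]
        rcases eq_or_ne N 0 with rfl | hN
        · simp
        · field_simp

lemma lintegral_sq_empirical_mean_sub_le [IsProbabilityMeasure P] (hφ : Measurable φ)
    (hφ2 : MemLp φ 2 μ) (hN : N ≠ 0) (hX : ∀ j, MeasurePreserving (X j) P μ)
    (hXind : iIndepFun X P) :
    ∫⁻ θ, ‖(N : ℝ)⁻¹ * ∑ j, φ (X j θ) - ∫ y, φ y ∂μ‖ₑ ^ 2 ∂P ≤
      (N : ℝ≥0∞)⁻¹ * ∫⁻ y, ‖φ y‖ₑ ^ 2 ∂μ := by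
  have : IsProbabilityMeasure μ :=
    (hX ⟨0, Nat.pos_of_ne_zero hN⟩).map_eq ▸ Measure.isProbabilityMeasure_map (hX _).aemeasurable
  have hY2 : ∀ j, MemLp (fun θ => φ (X j θ)) 2 P := fun j => hφ2.comp_measurePreserving (hX j)
  have hmean : P[fun θ => (N : ℝ)⁻¹ * ∑ j, φ (X j θ)] = ∫ y, φ y ∂μ := by
    rw [integral_const_mul, integral_finsetSum _ fun j _ => (hY2 j).integrable one_le_two]
    have hint : ∀ j, ∫ θ, φ (X j θ) ∂P = ∫ y, φ y ∂μ := fun j => by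
      rw [← (hX j).map_eq, integral_map (hX j).aemeasurable ((hX j).map_eq ▸ hφ2.1)]
    simp only [hint, Finset.sum_const, Finset.card_univ, Fintype.card_fin, nsmul_eq_mul]
    field_simp
  have hS2 : MemLp (fun θ => (N : ℝ)⁻¹ * ∑ j, φ (X j θ)) 2 P :=
    (memLp_finsetSum _ fun j _ => hY2 j).const_mul _
  calc ∫⁻ θ, ‖(N : ℝ)⁻¹ * ∑ j, φ (X j θ) - ∫ y, φ y ∂μ‖ₑ ^ 2 ∂P
      = ENNReal.ofReal Var[fun θ => (N : ℝ)⁻¹ * ∑ j, φ (X j θ); P] := by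
        rw [hS2.ofReal_variance_eq, evariance, hmean]
    _ ≤ ENNReal.ofReal ((N : ℝ)⁻¹ * ∫ y, φ y ^ 2 ∂μ) := by
        rw [variance_empirical_mean hφ hφ2 hX hXind]
        gcongr
        exact variance_le_expectation_sq hφ.aestronglyMeasurable
    _ = (N : ℝ≥0∞)⁻¹ * ∫⁻ y, ‖φ y‖ₑ ^ 2 ∂μ := by
        rw [ENNReal.ofReal_mul (by positivity), ENNReal.ofReal_inv_of_pos (by positivity),
          ENNReal.ofReal_natCast, ofReal_integral_eq_lintegral_ofReal hφ2.integrable_sq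
            (Filter.Eventually.of_forall fun y => sq_nonneg (φ y))]
        simp only [Real.enorm_eq_ofReal_abs, ← ENNReal.ofReal_pow (abs_nonneg _), sq_abs]

end EmpiricalMean

section EmpiricalProcess

variable {Θ S E : Type*} [MeasurableSpace S] {N : ℕ}

-- With `g x y = f y * ψ_h (x - y)` this is `Q_h f (x) - E[Q_h f (x)]` at the outcome `θ`.
noncomputable def empiricalDeviation (μ : Measure S) (g : E → S → ℝ) (X : Fin N → Θ → S)
    (θ : Θ) (x : E) : ℝ :=
  (N : ℝ)⁻¹ * ∑ j, g x (X j θ) - ∫ y, g x y ∂μ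

variable {μ : Measure S} {X : Fin N → Θ → S}

lemma empiricalDeviation_indicator_mul {s : Set S} (hs : MeasurableSet s) (f : S → ℝ)
    (k : E → S → ℝ) {θ : Θ} (hθ : ∀ j, X j θ ∈ s) :
    empiricalDeviation μ (fun x y => s.indicator f y * k x y) X θ =
      fun x => (N : ℝ)⁻¹ * ∑ j, f (X j θ) * k x (X j θ) - ∫ y in s, f y * k x y ∂μ := by
  funext x
  simp only [empiricalDeviation, Set.indicator_of_mem (hθ _), ← integral_indicator hs,
    Set.indicator_mul_left]

variable [MeasurableSpace Θ] [MeasurableSpace E] {P : Measure Θ} {ν : Measure E} {g : E → S → ℝ}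

lemma measurable_uncurry_empiricalDeviation [SFinite μ] (hg : Measurable (Function.uncurry g))
    (hX : ∀ j, Measurable (X j)) :
    Measurable (Function.uncurry (empiricalDeviation μ g X)) := by
  have hmean : Measurable fun x => ∫ y, g x y ∂μ :=
    (hg.stronglyMeasurable.integral_prod_right' (f := Function.uncurry g)).measurable
  refine Measurable.sub (Measurable.const_mul (Finset.measurable_sum _ fun j _ => ?_) _)
    (hmean.comp measurable_snd)
  exact hg.comp (measurable_snd.prodMk ((hX j).comp measurable_fst))

theorem lintegral_eLpNorm_empiricalDeviation_le [IsProbabilityMeasure P] [SFinite ν]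
    (hg : Measurable (Function.uncurry g)) (hg2 : ∀ x, MemLp (g x) 2 μ) (hN : N ≠ 0)
    (hX : ∀ j, MeasurePreserving (X j) P μ) (hXind : iIndepFun X P) :
    ∫⁻ θ, eLpNorm (empiricalDeviation μ g X θ) 2 ν ∂P ≤
      ((N : ℝ≥0∞)⁻¹ * ∫⁻ x, ∫⁻ y, ‖g x y‖ₑ ^ 2 ∂μ ∂ν) ^ (2⁻¹ : ℝ) := by
  have : IsProbabilityMeasure μ :=
    (hX ⟨0, Nat.pos_of_ne_zero hN⟩).map_eq ▸ Measure.isProbabilityMeasure_map (hX _).aemeasurable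
  set D := empiricalDeviation μ g X
  have hsq : Measurable fun q : Θ × E => ‖D q.1 q.2‖ₑ ^ 2 :=
    (measurable_uncurry_empiricalDeviation hg fun j => (hX j).measurable).enorm.pow_const 2
  calc ∫⁻ θ, eLpNorm (D θ) 2 ν ∂P
      = eLpNorm (fun θ => eLpNorm (D θ) 2 ν) 1 P := by
        simp only [eLpNorm_one_eq_lintegral_enorm, enorm_eq_self]
    _ ≤ eLpNorm (fun θ => eLpNorm (D θ) 2 ν) 2 P := by
        refine eLpNorm_le_eLpNorm_of_exponent_le one_le_two ?_
        simp only [eLpNorm_two_eq]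
        exact (hsq.lintegral_prod_right'.pow_const _).aestronglyMeasurable
    _ = (∫⁻ θ, ∫⁻ x, ‖D θ x‖ₑ ^ 2 ∂ν ∂P) ^ (2⁻¹ : ℝ) := by
        rw [eLpNorm_two_eq]
        simp only [enorm_eq_self, eLpNorm_two_sq]
    _ = (∫⁻ x, ∫⁻ θ, ‖D θ x‖ₑ ^ 2 ∂P ∂ν) ^ (2⁻¹ : ℝ) := by
        rw [lintegral_lintegral_swap hsq.aemeasurable]
    _ ≤ ((N : ℝ≥0∞)⁻¹ * ∫⁻ x, ∫⁻ y, ‖g x y‖ₑ ^ 2 ∂μ ∂ν) ^ (2⁻¹ : ℝ) := by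
        rw [← lintegral_const_mul' _ _ (by simpa using hN)]
        gcongr with x
        exact lintegral_sq_empirical_mean_sub_le (hg.comp measurable_prodMk_left) (hg2 x) hN hX
          hXind

end EmpiricalProcess

section KernelEstimator

variable {Θ : Type*} [MeasurableSpace Θ] {P : Measure Θ} [IsProbabilityMeasure P] {d : ℕ}
  {μ : Measure (EuclideanSpace ℝ (Fin d))} [IsProbabilityMeasure μ]
  {ψ F : EuclideanSpace ℝ (Fin d) → ℝ} {B h M : ℝ} {N : ℕ}
  {X : Fin N → Θ → EuclideanSpace ℝ (Fin d)}

theorem lintegral_eLpNorm_two_empiricalDeviation_mul_psih_le (hψ : Measurable ψ)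
    (hψ0 : ∀ x, 0 ≤ ψ x) (hψ1 : ∫ x, ψ x = 1) (hψB : ∀ x, ψ x ≤ B) (hh : 0 < h)
    (hF : Measurable F) (hFM : ∀ y, |F y| ≤ M) (s : Set (EuclideanSpace ℝ (Fin d)))
    (hN : N ≠ 0) (hX : ∀ j, MeasurePreserving (X j) P μ) (hXind : iIndepFun X P) :
    ∫⁻ θ, eLpNorm (empiricalDeviation μ (fun x y => F y * psih ψ h (x - y)) X θ) 2
        (volume.restrict s) ∂P ≤
      ENNReal.ofReal (M * √B * (√N)⁻¹ * (√(h ^ d))⁻¹) := by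
  have hM : 0 ≤ M := (abs_nonneg _).trans (hFM 0)
  have hB : 0 ≤ B := (hψ0 0).trans (hψB 0)
  have hg := measurable_uncurry_mul_psih_sub (h := h) hF hψ
  have hg2 : ∀ x, MemLp (fun y => F y * psih ψ h (x - y)) 2 μ := fun x =>
    MemLp.of_bound (hg.comp measurable_prodMk_left).aestronglyMeasurable (M * ((h ^ d)⁻¹ * B))
      (Filter.Eventually.of_forall fun y => by
        rw [Real.norm_eq_abs, abs_mul, abs_of_nonneg (psih_nonneg hψ0 hh.le _)]
        exact mul_le_mul (hFM y) (psih_le hψB hh.le _) (psih_nonneg hψ0 hh.le _) hM)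
  calc _ ≤ ((N : ℝ≥0∞)⁻¹ * ENNReal.ofReal (M ^ 2 * ((h ^ d)⁻¹ * B))) ^ (2⁻¹ : ℝ) := by
        refine (lintegral_eLpNorm_empiricalDeviation_le hg hg2 hN hX hXind).trans ?_
        gcongr
        exact lintegral_lintegral_enorm_mul_psih_sub_sq_le hψ hψ0 hψ1 hψB hh μ hFM s
    _ = ENNReal.ofReal (√((N : ℝ)⁻¹ * (M ^ 2 * ((h ^ d)⁻¹ * B)))) := by
        rw [Real.sqrt_eq_rpow, ← ENNReal.ofReal_rpow_of_nonneg (by positivity) (by norm_num),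
          ENNReal.ofReal_mul (inv_nonneg.2 (Nat.cast_nonneg N)),
          ENNReal.ofReal_inv_of_pos (by positivity), ENNReal.ofReal_natCast, one_div]
    _ = ENNReal.ofReal (M * √B * (√N)⁻¹ * (√(h ^ d))⁻¹) := by
        rw [Real.sqrt_mul (by positivity), Real.sqrt_inv, Real.sqrt_mul (sq_nonneg M),
          Real.sqrt_sq hM, Real.sqrt_mul (by positivity), Real.sqrt_inv]
        ring_nf

theorem lintegral_eLpNorm_empiricalDeviation_mul_psih_le (hψ : Measurable ψ)
    (hψ0 : ∀ x, 0 ≤ ψ x) (hψ1 : ∫ x, ψ x = 1) (hψB : ∀ x, ψ x ≤ B) (hh : 0 < h)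
    (hF : Measurable F) (hFM : ∀ y, |F y| ≤ M) {s : Set (EuclideanSpace ℝ (Fin d))}
    (hs : volume s ≠ ⊤) {p : ℝ≥0∞} (hp1 : 1 ≤ p) (hp2 : p ≤ 2) (hN : N ≠ 0)
    (hX : ∀ j, MeasurePreserving (X j) P μ) (hXind : iIndepFun X P) :
    ∫⁻ θ, eLpNorm (empiricalDeviation μ (fun x y => F y * psih ψ h (x - y)) X θ) p
        (volume.restrict s) ∂P ≤
      ENNReal.ofReal (M * √B * (√N)⁻¹ * (√(h ^ d))⁻¹) * max 1 (volume s) := by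
  have hD : ∀ θ, Measurable (empiricalDeviation μ (fun x y => F y * psih ψ h (x - y)) X θ) :=
    fun θ => (measurable_uncurry_empiricalDeviation (measurable_uncurry_mul_psih_sub hF hψ)
      fun j => (hX j).measurable).comp measurable_prodMk_left
  calc _ ≤ (∫⁻ θ, eLpNorm (empiricalDeviation μ (fun x y => F y * psih ψ h (x - y)) X θ) 2
        (volume.restrict s) ∂P) * max 1 (volume s) := by
        simpa using lintegral_eLpNorm_le_lintegral_eLpNorm_two_mul_max_one P
          (ν := volume.restrict s) (by simpa using hs) (fun θ => (hD θ).aestronglyMeasurable)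
          hp1 hp2
    _ ≤ _ := by
        gcongr
        exact lintegral_eLpNorm_two_empiricalDeviation_mul_psih_le hψ hψ0 hψ1 hψB hh hF hFM s hN
          hX hXind

end KernelEstimator

theorem stmt_13_general
    (d : ℕ)
    (Ω : Set (EuclideanSpace ℝ (Fin d)))
    (hΩcpt : IsCompact Ω)
    (μ : Measure (EuclideanSpace ℝ (Fin d))) [IsProbabilityMeasure μ]
    (hμΩ : μ Ωᶜ = 0)
    (ψ : EuclideanSpace ℝ (Fin d) → ℝ)
    (hψcont : Continuous ψ) (hψbdd : ∃ M, ∀ x, ψ x ≤ M) (hψpos : ∀ x, 0 ≤ ψ x)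
    (hψint : ∫ x, ψ x = 1)
    (f : EuclideanSpace ℝ (Fin d) → ℝ) (hf : ContinuousOn f Ω)
    (Θ : Type) [MeasurableSpace Θ] (P : Measure Θ) [IsProbabilityMeasure P] :
    ∃ C > 0, ∀ p : ℝ≥0∞, 1 ≤ p → p ≤ 2 → ∀ h : ℝ, 0 < h → h < 1 → ∀ N : ℕ, 1 ≤ N →
      ∀ X : Fin N → Θ → EuclideanSpace ℝ (Fin d),
        (∀ j, Measurable (X j)) → (∀ j, Measure.map (X j) P = μ) →
        iIndepFun X P →
      ∫⁻ θ, eLpNorm (fun x =>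
            (N : ℝ)⁻¹ * ∑ j, f (X j θ) * psih ψ h (x - X j θ) -
            ∫ y in Ω, f y * psih ψ h (x - y) ∂μ)
          p (volume.restrict Ω) ∂P ≤
        ENNReal.ofReal (C * (Real.sqrt N)⁻¹ * (Real.sqrt (h ^ d))⁻¹) := by
  have hΩ : MeasurableSet Ω := hΩcpt.isClosed.measurableSet
  have hΩfin : volume Ω ≠ ⊤ := hΩcpt.measure_lt_top.ne
  obtain ⟨M, hM, hfM⟩ := hΩcpt.exists_pos_abs_indicator_le hf
  obtain ⟨B, hB, hψB⟩ : ∃ B > 0, ∀ x, ψ x ≤ B := by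
    obtain ⟨B, hB⟩ := hψbdd
    exact ⟨max B 1, by positivity, fun x => (hB x).trans (le_max_left _ _)⟩
  have hc : max 1 (volume Ω) ≠ ⊤ := max_ne_top ENNReal.one_ne_top hΩfin
  have hc0 : 0 < (max 1 (volume Ω)).toReal := ENNReal.toReal_pos (by simp) hc
  refine ⟨(max 1 (volume Ω)).toReal * M * √B, by positivity,
    fun p hp1 hp2 h hh _ N hN X hXm hXlaw hXind => ?_⟩
  have hX : ∀ j, MeasurePreserving (X j) P μ := fun j => ⟨hXm j, hXlaw j⟩
  have hsample : ∀ᵐ θ ∂P, ∀ j, X j θ ∈ Ω :=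
    ae_all_iff.2 fun j => (hX j).quasiMeasurePreserving.ae (ae_iff.2 hμΩ)
  calc _ = ∫⁻ θ, eLpNorm (empiricalDeviation μ (fun x y => Ω.indicator f y * psih ψ h (x - y)) X θ)
        p (volume.restrict Ω) ∂P := lintegral_congr_ae <|
        hsample.mono fun θ hθ => congrArg (eLpNorm · p (volume.restrict Ω))
          (empiricalDeviation_indicator_mul hΩ f (fun x y => psih ψ h (x - y)) hθ).symm
    _ ≤ ENNReal.ofReal (M * √B * (√N)⁻¹ * (√(h ^ d))⁻¹) * max 1 (volume Ω) :=
        lintegral_eLpNorm_empiricalDeviation_mul_psih_le hψcont.measurable hψpos hψint hψB hh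
          (hf.measurable_indicator hΩ) hfM hΩfin hp1 hp2 (by omega) hX hXind
    _ = ENNReal.ofReal ((max 1 (volume Ω)).toReal * M * √B * (√N)⁻¹ * (√(h ^ d))⁻¹) := by
        rw [← ENNReal.ofReal_toReal hc, ← ENNReal.ofReal_mul (by positivity),
          ENNReal.toReal_ofReal hc0.le]
        ring_nf

/-- Paper's Lemma 3.5: there is `C > 0` depending only on
`d, Ω, μ, ψ, ‖f‖_∞` such that for every `1 ≤ p ≤ 2`, `0 < h < 1` and `N ≥ 1`,
`E‖Q_h f − E[Q_h f]‖_p ≤ C N^{−1/2} h^{−d/2}`. -/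
theorem stmt_13
    (d : ℕ) (hd : 1 ≤ d)
    (Ω : Set (EuclideanSpace ℝ (Fin d)))
    (hΩcpt : IsCompact Ω) (hΩconv : Convex ℝ Ω) (hΩint : (interior Ω).Nonempty)
    (μ : Measure (EuclideanSpace ℝ (Fin d))) [IsProbabilityMeasure μ]
    (hμΩ : μ Ωᶜ = 0)
    (hA2 : ∃ μs : Measure (EuclideanSpace ℝ (Fin d)),
      IsFiniteMeasure μs ∧ μs.restrict Ω = μ ∧ FourierL1 μs)
    (ψ : EuclideanSpace ℝ (Fin d) → ℝ)
    (hψcont : Continuous ψ) (hψbdd : ∃ M, ∀ x, ψ x ≤ M) (hψpos : ∀ x, 0 ≤ ψ x)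
    (hψint : ∫ x, ψ x = 1)
    (hψmom : Integrable (fun x : EuclideanSpace ℝ (Fin d) => ‖x‖ * ψ x) volume)
    (f : EuclideanSpace ℝ (Fin d) → ℝ) (hf : ContinuousOn f Ω)
    (Θ : Type) [MeasurableSpace Θ] (P : Measure Θ) [IsProbabilityMeasure P] :
    ∃ C > 0, ∀ p : ℝ≥0∞, 1 ≤ p → p ≤ 2 → ∀ h : ℝ, 0 < h → h < 1 → ∀ N : ℕ, 1 ≤ N →
      ∀ X : Fin N → Θ → EuclideanSpace ℝ (Fin d),
        (∀ j, Measurable (X j)) → (∀ j, Measure.map (X j) P = μ) →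
        iIndepFun X P →
      ∫⁻ θ, eLpNorm (fun x =>
            (N : ℝ)⁻¹ * ∑ j, f (X j θ) * psih ψ h (x - X j θ) -
            ∫ y in Ω, f y * psih ψ h (x - y) ∂μ)
          p (volume.restrict Ω) ∂P ≤
        ENNReal.ofReal (C * (Real.sqrt N)⁻¹ * (Real.sqrt (h ^ d))⁻¹) :=
  stmt_13_general d Ω hΩcpt μ hμΩ ψ hψcont hψbdd hψpos hψint f hf Θ P
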